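/- arXiv:1509.04509 — 2 statements merged into one kernel-verified Lean document; each statement's English description precedes it below -/
import Mathlib

section
/- Let n ≥ 5 and for each 1 ≤ i < j ≤ n let w_{ij} be a word over X_n with c(w_{ij}) = X_n \ {x_i}, and suppose that i_2((w_{ij})^{(pq)}) = i_2((w_{pq})^{(ij)}) for all pairwise distinct i, j, p, q with i < j and p < q, and i_2((w_{ij})^{(jk)}) = i_2((w_{jk})^{(ik)}) = i_2((w_{ik})^{(jk)}) for all i < j < k (i.e. {w_{ij}} is an essential n-scheme of words for the variety of left regular bands, in which an identity u ≈ v holds if and only if i_2(u) = i_2(v)). Then there exists a unique permutation π of {1,…,n} such that for all 1 ≤ i < j ≤ n, i_2(w_{ij}) = x_{α_1}⋯x_{α_{n−1}}, where the sequence (α_1,…,α_{n−1}) is obtained from (π(1),…,π(n)) by replacing the entry i by j and then deleting the rightmost of the two resulting occurrences of j. Moreover, if w is a word over X_n such that i_2(w^{(ij)}) = i_2(w_{ij}) for all 1 ≤ i < j ≤ n, then i_2(w) = x_{π(1)}⋯x_{π(n)}. -/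
/-! ### Words and word functions -/

/-- The word `w^{(i j)}`: replace every occurrence of the letter `i` by `j`. -/
def subst {X : Type*} [DecidableEq X] (w : List X) (i j : X) : List X :=
  w.map fun t => if t = i then j else t

/-- The prefix `s(w)`: the longest prefix of `w` containing all but one of the
letters of `c(w)` (the empty word if `w` is empty). -/
def wordS {X : Type*} [DecidableEq X] (w : List X) : List X :=
  w.take (w.toFinset.sup fun x => w.idxOf x)

/-- The letter `σ(w)` (the last letter of `w` to occur from the left), as a word of
length at most one; `s(w) ++ σ(w)` is the shortest prefix of `w` with full content. -/
def wordSigma {X : Type*} [DecidableEq X] (w : List X) : List X :=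
  (w.drop (w.toFinset.sup fun x => w.idxOf x)).take 1

/-- The suffix `e(w)`, dual to `s(w)`. -/
def wordE {X : Type*} [DecidableEq X] (w : List X) : List X :=
  (wordS w.reverse).reverse

/-- The letter `ε(w)` (as a word of length at most one), dual to `σ(w)`. -/
def wordEps {X : Type*} [DecidableEq X] (w : List X) : List X :=
  (wordSigma w.reverse).reverse

/-- The initial part `i₂(w)`: retain only the first occurrence from the left of
each letter of `w`. -/
def initPart {X : Type*} [DecidableEq X] (w : List X) : List X :=
  w.reverse.dedup.reverse

/-- The dual `F̄` of a word function `F`: `F̄(w) = reverse (F (reverse w))`. -/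
def dualW {X : Type*} (F : List X → List X) (w : List X) : List X :=
  (F w.reverse).reverse

theorem wordS_length_lt {X : Type*} [DecidableEq X] {w : List X} (hw : w ≠ []) :
    (wordS w).length < w.length := by
  have hpos : 0 < w.length := List.length_pos_iff.mpr hw
  have hk : (w.toFinset.sup fun x => w.idxOf x) < w.length := by
    rw [Finset.sup_lt_iff hpos]
    intro x hx
    exact List.idxOf_lt_length_iff.mpr (List.mem_toFinset.mp hx)
  simp only [wordS, List.length_take]
  omega

/-- The common recursion defining the word functions `h_m` and `i_m` of Gerhard
and Petrich: `t_m(w) = t_m(s(w)) · σ(w) · t̄_{m-1}(w)` for `m ≥ 3`, where the base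
function (`h₂` = first letter, `i₂` = initial part) is a parameter, and all
functions send the empty word to the empty word. -/
def tW {X : Type*} [DecidableEq X] (base : List X → List X) : ℕ → List X → List X
  | m, w =>
    if hw : w = [] then []
    else if hm : m ≤ 2 then base w
    else tW base m (wordS w) ++ wordSigma w ++ (tW base (m - 1) w.reverse).reverse
termination_by m w => m + w.length
decreasing_by
  · have := wordS_length_lt hw; omega
  · simp only [List.length_unattach, List.length_reverse, List.length_attach]; omega

/-- The word function `h_m` (`m ≥ 2`): `h₂(w)` is the first letter of `w`, and
`h_m(w) = h_m(s(w)) · σ(w) · h̄_{m-1}(w)` for `m ≥ 3`. -/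
def hW {X : Type*} [DecidableEq X] : ℕ → List X → List X :=
  tW fun w => w.take 1

/-- The word function `i_m` (`m ≥ 2`): `i₂(w)` is the initial part of `w`, and
`i_m(w) = i_m(s(w)) · σ(w) · ī_{m-1}(w)` for `m ≥ 3`. -/
def iW {X : Type*} [DecidableEq X] : ℕ → List X → List X :=
  tW initPart

/-! ### Operations induced by words -/

/-- Evaluation of a word `w` over the alphabet `X` in a semigroup `S` under the
assignment `a : X → S`, computed in the monoid `WithOne S` (so that the empty word
evaluates to `1` and a nonempty word to the coercion of its value in `S`). -/
def evalW {X S : Type*} [Semigroup S] (a : X → S) (w : List X) : WithOne S :=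
  (w.map fun t => (a t : WithOne S)).prod

/-- The identification minor `f_{i j}` of an `n`-ary operation: the `i`-th argument
is replaced by the `j`-th. -/
def minor {α β : Type*} {n : ℕ} (f : (Fin n → α) → β) (i j : Fin n) :
    (Fin n → α) → β :=
  fun a => f (Function.update a i (a j))

/-- `f` depends on its `i`-th variable. -/
def DependsOnVar {α β : Type*} {n : ℕ} (f : (Fin n → α) → β) (i : Fin n) : Prop :=
  ∃ a b : Fin n → α, (∀ k : Fin n, k ≠ i → a k = b k) ∧ f a ≠ f b

/-- `f : Sⁿ → S` is induced by a (nonempty) word over `X_n = {x_1, …, x_n}`. -/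
def InducedByWord {S : Type*} [Semigroup S] {n : ℕ} (f : (Fin n → S) → S) : Prop :=
  ∃ w : List (Fin n), w ≠ [] ∧ ∀ a : Fin n → S, (f a : WithOne S) = evalW a w

/-! The scheme identities force any two words `w_pq`, `w_p'q'` to list two letters `a, b` outside
`{p, q, p', q'}` in the same order of first occurrence: directly by `(w_ij)^(pq) ≈ (w_pq)^(ij)`
when the pairs are disjoint, and by the identities for `i < j < k` when they share a letter.
So "`a` precedes `b` in some `w_pq` with `p, q ∉ {a, b}`" is well defined, and because every
three letters are avoided by some pair once `n ≥ 5`, it is a strict total order; `π` lists the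
letters in this order. The only letter of `w_ij` not seen this way is `j`, and comparing
`(w_ij)^(pq)` with `(w_pq)^(ij)` shows that it stands where the first of `i`, `j` stands in `π`.
Conversely any word realising the scheme orders its letters by the same relation, which gives
uniqueness and the last claim. -/

section Words

variable {X : Type*} [DecidableEq X] {a b : X}

theorem List.dedup_append_singleton (l : List X) (x : X) :
    (l ++ [x]).dedup = l.dedup.filter (· ≠ x) ++ [x] := by
  induction l with
  | nil => simp
  | cons y t ih =>
    by_cases hy : y = x
    · subst hy
      rw [List.cons_append, List.dedup_cons_of_mem (by simp), ih, List.dedup_cons]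
      split_ifs <;> simp
    · by_cases ht : y ∈ t <;> simp [ih, ht, hy]

theorem List.idxOf_filter_lt_idxOf_filter_iff {p : X → Bool} (ha : p a) (hb : p b)
    (l : List X) : (l.filter p).idxOf a < (l.filter p).idxOf b ↔ l.idxOf a < l.idxOf b := by
  induction l with
  | nil => simp
  | cons x t ih =>
    by_cases hx : p x <;> simp only [List.filter_cons, hx, if_true, List.idxOf_cons] <;> grind

theorem List.idxOf_lt_idxOf_comm {l : List X} (ha : a ∈ l) (hab : a ≠ b) :
    l.idxOf b < l.idxOf a ↔ ¬ l.idxOf a < l.idxOf b := by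
  have : l.idxOf a ≠ l.idxOf b := fun h => hab ((List.idxOf_inj ha).mp h)
  omega

theorem List.eq_of_idxOf_lt_idxOf_iff {l₁ l₂ : List X} (h₁ : l₁.Nodup) (h₂ : l₂.Nodup)
    (hmem : ∀ a, a ∈ l₁ ↔ a ∈ l₂)
    (hord : ∀ a ∈ l₁, ∀ b ∈ l₁, l₁.idxOf a < l₁.idxOf b ↔ l₂.idxOf a < l₂.idxOf b) :
    l₁ = l₂ := by
  induction l₁ generalizing l₂ with
  | nil =>
    cases l₂ with
    | nil => rfl
    | cons y s => simpa using hmem y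
  | cons x t ih =>
    cases l₂ with
    | nil => simpa using hmem x
    | cons y s =>
      obtain rfl : x = y := by
        by_contra hxy
        have := hord x (by simp) y ((hmem y).mpr (by simp))
        simp [hxy, Ne.symm hxy] at this
      rw [List.nodup_cons] at h₁ h₂
      congr 1
      refine ih h₁.2 h₂.2 (fun a => ?_) (fun a ha b hb => ?_)
      · have := hmem a
        grind
      · have := hord a (by simp [ha]) b (by simp [hb])
        grind

theorem mem_initPart {w : List X} : a ∈ initPart w ↔ a ∈ w := by
  simp [initPart]

theorem nodup_initPart (w : List X) : (initPart w).Nodup := by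
  simpa [initPart] using List.nodup_dedup w.reverse

theorem List.Nodup.initPart_eq {l : List X} (h : l.Nodup) : initPart l = l := by
  simp [initPart, (List.nodup_reverse.mpr h).dedup]

theorem initPart_cons (x : X) (t : List X) :
    initPart (x :: t) = x :: (initPart t).filter (· ≠ x) := by
  simp [initPart, List.dedup_append_singleton, List.filter_reverse]

theorem idxOf_initPart_lt_idxOf_initPart_iff (w : List X) :
    (initPart w).idxOf a < (initPart w).idxOf b ↔ w.idxOf a < w.idxOf b := by
  induction w with
  | nil => simp [initPart]
  | cons x t ih =>
    rw [initPart_cons]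
    by_cases hax : a = x <;> by_cases hbx : b = x
    · simp [hax, hbx]
    · simp [hax, List.idxOf_cons_ne _ (Ne.symm hbx)]
    · simp [hbx, List.idxOf_cons_ne _ (Ne.symm hax)]
    · simp only [List.idxOf_cons_ne _ (Ne.symm hax), List.idxOf_cons_ne _ (Ne.symm hbx),
        Nat.succ_lt_succ_iff]
      rw [List.idxOf_filter_lt_idxOf_filter_iff (by simpa using hax) (by simpa using hbx), ih]

theorem idxOf_lt_idxOf_iff_of_initPart_eq {u v : List X} (h : initPart u = initPart v) :
    u.idxOf a < u.idxOf b ↔ v.idxOf a < v.idxOf b := by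
  rw [← idxOf_initPart_lt_idxOf_initPart_iff, h, idxOf_initPart_lt_idxOf_initPart_iff]

theorem initPart_eq_initPart_of_idxOf_lt_idxOf_iff {u v : List X} (hmem : ∀ a, a ∈ u ↔ a ∈ v)
    (hord : ∀ a ∈ u, ∀ b ∈ u, u.idxOf a < u.idxOf b ↔ v.idxOf a < v.idxOf b) :
    initPart u = initPart v := by
  refine List.eq_of_idxOf_lt_idxOf_iff (nodup_initPart u) (nodup_initPart v)
    (by simpa [mem_initPart] using hmem) (fun a ha b hb => ?_)
  rw [idxOf_initPart_lt_idxOf_initPart_iff, idxOf_initPart_lt_idxOf_initPart_iff]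
  exact hord a (mem_initPart.mp ha) b (mem_initPart.mp hb)

theorem mem_subst {v : List X} {i j : X} :
    a ∈ subst v i j ↔ a ∈ v ∧ a ≠ i ∨ a = j ∧ i ∈ v := by
  simp only [subst, List.mem_map]
  grind

theorem idxOf_subst_of_ne {v : List X} {i j : X} (hi : a ≠ i) (hj : a ≠ j) :
    (subst v i j).idxOf a = v.idxOf a := by
  induction v with
  | nil => rfl
  | cons x t ih => simp only [subst, List.map_cons, List.idxOf_cons] at *; grind

theorem idxOf_subst_self (v : List X) (i j : X) :
    (subst v i j).idxOf j = min (v.idxOf i) (v.idxOf j) := by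
  induction v with
  | nil => rfl
  | cons x t ih => simp only [subst, List.map_cons, List.idxOf_cons] at *; grind

theorem idxOf_lt_idxOf_iff_of_initPart_subst_eq {u v : List X} {i j p q : X}
    (h : initPart (subst u i j) = initPart (subst v p q))
    (ha : a ∉ [i, j, p, q]) (hb : b ∉ [i, j, p, q]) :
    u.idxOf a < u.idxOf b ↔ v.idxOf a < v.idxOf b := by
  simp only [List.mem_cons, List.not_mem_nil, or_false, not_or] at ha hb
  have := idxOf_lt_idxOf_iff_of_initPart_eq (a := a) (b := b) h
  rwa [idxOf_subst_of_ne ha.1 ha.2.1, idxOf_subst_of_ne hb.1 hb.2.1,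
    idxOf_subst_of_ne ha.2.2.1 ha.2.2.2, idxOf_subst_of_ne hb.2.2.1 hb.2.2.2] at this

end Words

theorem Fin.exists_lt_notMem {n : ℕ} (s : Finset (Fin n)) (hs : s.card + 2 ≤ n) :
    ∃ p q : Fin n, p < q ∧ ∀ x ∈ s, x ∉ [p, q] := by
  have : 1 < sᶜ.card := by rw [Finset.card_compl, Fintype.card_fin]; omega
  obtain ⟨p, hp, q, hq, hpq⟩ := Finset.one_lt_card.mp this
  rw [Finset.mem_compl] at hp hq
  rcases lt_or_gt_of_ne hpq with h | h
  · exact ⟨p, q, h, fun x hx => by grind⟩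
  · exact ⟨q, p, h, fun x hx => by grind⟩

theorem List.idxOf_map_perm_finRange {n : ℕ} (σ : Equiv.Perm (Fin n)) (a : Fin n) :
    ((List.finRange n).map σ).idxOf a = σ.symm a := by
  conv_rhs => rw [← List.idxOf_finRange (σ.symm a)]
  simp only [List.idxOf, List.findIdx_map]
  congr 1
  funext k
  simp [Equiv.eq_symm_apply]

open Finset in
theorem exists_perm_lt_iff {n : ℕ} (r : Fin n → Fin n → Prop) [IsStrictTotalOrder (Fin n) r] :
    ∃ σ : Equiv.Perm (Fin n), ∀ a b, σ a < σ b ↔ r a b := by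
  classical
  have hrank_lt (a : Fin n) : #{c | r c a} < n := by
    simpa using card_lt_univ_of_notMem (s := {c | r c a}) (by simpa using irrefl_of r a)
  let rank (a : Fin n) : Fin n := ⟨#{c | r c a}, hrank_lt a⟩
  have hmono {a b : Fin n} (hab : r a b) : rank a < rank b := by
    refine Fin.mk_lt_mk.mpr (card_lt_card ⟨fun c hc => ?_, fun h => irrefl_of r a ?_⟩)
    · simp only [mem_filter, mem_univ, true_and] at hc ⊢
      exact _root_.trans hc hab
    · simpa using h (by simpa using hab)
  have hrank {a b : Fin n} : rank a < rank b ↔ r a b := by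
    refine ⟨fun h => ?_, hmono⟩
    rcases trichotomous_of r a b with hab | rfl | hba
    · exact hab
    · exact absurd h (lt_irrefl _)
    · exact absurd (hmono hba) (lt_asymm h)
  have hinj : Function.Injective rank := fun a b h => by
    rcases trichotomous_of r a b with hab | rfl | hba
    · exact absurd h (hrank.mpr hab).ne
    · rfl
    · exact absurd h (hrank.mpr hba).ne'
  exact ⟨Equiv.ofBijective rank (Finite.injective_iff_bijective.mp hinj), fun a b => hrank⟩

structure IsEssentialScheme {n : ℕ} (w : Fin n → Fin n → List (Fin n)) : Prop where
  toFinset_eq : ∀ i j : Fin n, i < j → (w i j).toFinset = Finset.univ \ {i}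
  disjoint : ∀ i j p q : Fin n, i < j → p < q → i ≠ p → i ≠ q → j ≠ p → j ≠ q →
    initPart (subst (w i j) p q) = initPart (subst (w p q) i j)
  overlap : ∀ i j k : Fin n, i < j → j < k →
    initPart (subst (w i j) j k) = initPart (subst (w j k) i k) ∧
    initPart (subst (w j k) i k) = initPart (subst (w i k) j k)

def Precedes {n : ℕ} (w : Fin n → Fin n → List (Fin n)) (a b : Fin n) : Prop :=
  ∃ p q, p < q ∧ a ∉ [p, q] ∧ b ∉ [p, q] ∧ (w p q).idxOf a < (w p q).idxOf b

def RealizesScheme {n : ℕ} (M : List (Fin n)) (w : Fin n → Fin n → List (Fin n)) : Prop :=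
  ∀ p q : Fin n, p < q → initPart (subst M p q) = initPart (w p q)

namespace IsEssentialScheme

variable {n : ℕ} {w : Fin n → Fin n → List (Fin n)} {a b c i j k p q : Fin n}

theorem mem_iff (hw : IsEssentialScheme w) (hij : i < j) : a ∈ w i j ↔ a ≠ i := by
  rw [← List.mem_toFinset, hw.toFinset_eq i j hij]
  simp

theorem idxOf_lt_iff_of_lt_of_lt (hw : IsEssentialScheme w) (hij : i < j) (hjk : j < k)
    (ha : a ∉ [i, j, k]) (hb : b ∉ [i, j, k]) :
    ((w i j).idxOf a < (w i j).idxOf b ↔ (w j k).idxOf a < (w j k).idxOf b) ∧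
    ((w j k).idxOf a < (w j k).idxOf b ↔ (w i k).idxOf a < (w i k).idxOf b) :=
  ⟨idxOf_lt_idxOf_iff_of_initPart_subst_eq (hw.overlap i j k hij hjk).1 (by grind) (by grind),
    idxOf_lt_idxOf_iff_of_initPart_subst_eq (hw.overlap i j k hij hjk).2 (by grind) (by grind)⟩

theorem idxOf_lt_iff_idxOf_lt (hw : IsEssentialScheme w) {p' q' : Fin n} (hpq : p < q)
    (hpq' : p' < q') (ha : a ∉ [p, q, p', q']) (hb : b ∉ [p, q, p', q']) :
    (w p q).idxOf a < (w p q).idxOf b ↔ (w p' q').idxOf a < (w p' q').idxOf b := by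
  wlog hp : p ≤ p' generalizing p q p' q'
  · exact (this hpq' hpq (by grind) (by grind) (le_of_not_ge hp)).symm
  rcases hp.lt_or_eq with hp | rfl
  · rcases eq_or_ne q p' with rfl | hqp'
    · exact (hw.idxOf_lt_iff_of_lt_of_lt hpq hpq' (by grind) (by grind)).1
    rcases eq_or_ne q q' with rfl | hqq'
    · exact (hw.idxOf_lt_iff_of_lt_of_lt hp hpq' (by grind) (by grind)).2.symm
    exact idxOf_lt_idxOf_iff_of_initPart_subst_eq
      (hw.disjoint p q p' q' hpq hpq' hp.ne (by grind) hqp' hqq') (by grind) (by grind)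
  · rcases lt_trichotomy q q' with hq | rfl | hq
    · have h := hw.idxOf_lt_iff_of_lt_of_lt (a := a) (b := b) hpq hq (by grind) (by grind)
      exact h.1.trans h.2
    · rfl
    · have h := hw.idxOf_lt_iff_of_lt_of_lt (a := a) (b := b) hpq' hq (by grind) (by grind)
      exact (h.1.trans h.2).symm

theorem idxOf_lt_iff_precedes (hw : IsEssentialScheme w) (hpq : p < q) (ha : a ∉ [p, q])
    (hb : b ∉ [p, q]) : (w p q).idxOf a < (w p q).idxOf b ↔ Precedes w a b :=
  ⟨fun h => ⟨p, q, hpq, ha, hb, h⟩, fun ⟨_, _, hpq', ha', hb', h⟩ =>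
    (hw.idxOf_lt_iff_idxOf_lt hpq hpq' (by grind) (by grind)).mpr h⟩

theorem precedes_irrefl (a : Fin n) : ¬ Precedes w a a :=
  fun ⟨_, _, _, _, _, h⟩ => lt_irrefl _ h

theorem precedes_trans (hw : IsEssentialScheme w) (hn : 5 ≤ n) (hab : Precedes w a b)
    (hbc : Precedes w b c) : Precedes w a c := by
  obtain ⟨p, q, hpq, h⟩ := Fin.exists_lt_notMem {a, b, c}
    (by have := Finset.card_le_three (a := a) (b := b) (c := c); omega)
  simp only [Finset.mem_insert, Finset.mem_singleton, forall_eq_or_imp, forall_eq] at h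
  rw [← hw.idxOf_lt_iff_precedes hpq h.1 h.2.1] at hab
  rw [← hw.idxOf_lt_iff_precedes hpq h.2.1 h.2.2] at hbc
  exact (hw.idxOf_lt_iff_precedes hpq h.1 h.2.2).mp (hab.trans hbc)

theorem eq_of_not_precedes_of_not_precedes (hw : IsEssentialScheme w) (hn : 4 ≤ n)
    (hab : ¬ Precedes w a b) (hba : ¬ Precedes w b a) : a = b := by
  obtain ⟨p, q, hpq, h⟩ := Fin.exists_lt_notMem {a, b}
    (by have := Finset.card_le_two (a := a) (b := b); omega)
  simp only [Finset.mem_insert, Finset.mem_singleton, forall_eq_or_imp, forall_eq] at h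
  rw [← hw.idxOf_lt_iff_precedes hpq h.1 h.2] at hab
  rw [← hw.idxOf_lt_iff_precedes hpq h.2 h.1] at hba
  exact (List.idxOf_inj ((hw.mem_iff hpq).mpr (by grind))).mp (by omega)

theorem isStrictTotalOrder (hw : IsEssentialScheme w) (hn : 5 ≤ n) :
    IsStrictTotalOrder (Fin n) (Precedes w) where
  irrefl := precedes_irrefl
  trans _ _ _ := hw.precedes_trans hn
  trichotomous _ _ := hw.eq_of_not_precedes_of_not_precedes (by omega)

theorem idxOf_self_lt_iff (hw : IsEssentialScheme w) (hn : 5 ≤ n) (hij : i < j) (hbi : b ≠ i)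
    (hbj : b ≠ j) : (w i j).idxOf j < (w i j).idxOf b ↔ Precedes w i b ∨ Precedes w j b := by
  obtain ⟨p, q, hpq, h⟩ := Fin.exists_lt_notMem {i, j, b}
    (by have := Finset.card_le_three (a := i) (b := j) (c := b); omega)
  simp only [Finset.mem_insert, Finset.mem_singleton, forall_eq_or_imp, forall_eq] at h
  have hC := hw.disjoint i j p q hij hpq (by grind) (by grind) (by grind) (by grind)
  have := idxOf_lt_idxOf_iff_of_initPart_eq (a := j) (b := b) hC
  rwa [idxOf_subst_of_ne (by grind) (by grind), idxOf_subst_of_ne (by grind) (by grind),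
    idxOf_subst_self, idxOf_subst_of_ne hbi hbj, min_lt_iff,
    hw.idxOf_lt_iff_precedes hpq h.1 h.2.2, hw.idxOf_lt_iff_precedes hpq h.2.1 h.2.2] at this

theorem initPart_eq_initPart_subst (hw : IsEssentialScheme w) (hn : 5 ≤ n) {L : List (Fin n)}
    (hLmem : ∀ a, a ∈ L) (hL : ∀ a b, L.idxOf a < L.idxOf b ↔ Precedes w a b) (hij : i < j) :
    initPart (w i j) = initPart (subst L i j) := by
  have hmem (a : Fin n) : a ∈ subst L i j ↔ a ≠ i := by
    simp only [mem_subst, hLmem, true_and]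
    grind
  have hj (b : Fin n) (hbi : b ≠ i) (hbj : b ≠ j) :
      (w i j).idxOf j < (w i j).idxOf b ↔ (subst L i j).idxOf j < (subst L i j).idxOf b := by
    rw [hw.idxOf_self_lt_iff hn hij hbi hbj, idxOf_subst_self, idxOf_subst_of_ne hbi hbj,
      min_lt_iff, hL, hL]
  refine initPart_eq_initPart_of_idxOf_lt_idxOf_iff (fun a => by rw [hw.mem_iff hij, hmem])
    (fun a ha b hb => ?_)
  rw [hw.mem_iff hij] at ha hb
  rcases eq_or_ne a b with rfl | hab
  · simp
  rcases eq_or_ne a j with rfl | haj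
  · exact hj b hb (Ne.symm hab)
  rcases eq_or_ne b j with rfl | hbj
  · rw [List.idxOf_lt_idxOf_comm ((hw.mem_iff hij).mpr hb) (Ne.symm hab),
      List.idxOf_lt_idxOf_comm ((hmem b).mpr hb) (Ne.symm hab), hj a ha haj]
  rw [idxOf_subst_of_ne ha haj, idxOf_subst_of_ne hb hbj, hL,
    hw.idxOf_lt_iff_precedes hij (by grind) (by grind)]

theorem mem_of_realizesScheme (hw : IsEssentialScheme w) (hn : 3 ≤ n) {M : List (Fin n)}
    (hM : RealizesScheme M w) (a : Fin n) : a ∈ M := by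
  obtain ⟨p, q, hpq, h⟩ := Fin.exists_lt_notMem {a} (by simp; omega)
  simp only [Finset.mem_singleton, forall_eq, List.mem_cons, List.not_mem_nil, or_false,
    not_or] at h
  have ha : a ∈ initPart (subst M p q) := by
    rw [hM p q hpq, mem_initPart, hw.mem_iff hpq]
    exact h.1
  rw [mem_initPart, mem_subst] at ha
  grind

theorem idxOf_lt_iff_precedes_of_realizesScheme (hw : IsEssentialScheme w) (hn : 4 ≤ n)
    {M : List (Fin n)} (hM : RealizesScheme M w) (a b : Fin n) :
    M.idxOf a < M.idxOf b ↔ Precedes w a b := by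
  obtain ⟨p, q, hpq, h⟩ := Fin.exists_lt_notMem {a, b}
    (by have := Finset.card_le_two (a := a) (b := b); omega)
  simp only [Finset.mem_insert, Finset.mem_singleton, forall_eq_or_imp, forall_eq] at h
  rw [← hw.idxOf_lt_iff_precedes hpq h.1 h.2, ← idxOf_lt_idxOf_iff_of_initPart_eq (hM p q hpq),
    idxOf_subst_of_ne (by grind) (by grind), idxOf_subst_of_ne (by grind) (by grind)]

theorem initPart_eq_of_realizesScheme (hw : IsEssentialScheme w) (hn : 4 ≤ n)
    {M M' : List (Fin n)} (hM : RealizesScheme M w) (hM' : RealizesScheme M' w) :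
    initPart M = initPart M' := by
  refine initPart_eq_initPart_of_idxOf_lt_idxOf_iff
    (fun a => by simp [hw.mem_of_realizesScheme (by omega) hM a,
      hw.mem_of_realizesScheme (by omega) hM' a]) (fun a _ b _ => ?_)
  rw [hw.idxOf_lt_iff_precedes_of_realizesScheme hn hM,
    hw.idxOf_lt_iff_precedes_of_realizesScheme hn hM']

end IsEssentialScheme

/-- An essential `n`-scheme of words (`n ≥ 5`) for the variety of
left regular bands has a unique associated permutation `π` of `{1,…,n}`: for all
`i < j`, `i₂(w_{ij})` equals the sequence obtained from `(π(1),…,π(n))` by replacing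
the entry `i` by `j` and deleting the rightmost of the two resulting occurrences of
`j` (equivalently, `i₂` applied to the substituted list); moreover if the scheme
comes from a word `w` (i.e. `i₂(w^{(ij)}) = i₂(w_{ij})` for all `i < j`) then
`i₂(w) = x_{π(1)} ⋯ x_{π(n)}`. -/
theorem associated_permutation (n : ℕ) (hn : 5 ≤ n)
    (w : Fin n → Fin n → List (Fin n))
    (hc : ∀ i j : Fin n, i < j → (w i j).toFinset = Finset.univ \ {i})
    (hC1 : ∀ i j p q : Fin n, i < j → p < q → i ≠ p → i ≠ q → j ≠ p → j ≠ q →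
      initPart (subst (w i j) p q) = initPart (subst (w p q) i j))
    (hC2 : ∀ i j k : Fin n, i < j → j < k →
      initPart (subst (w i j) j k) = initPart (subst (w j k) i k) ∧
      initPart (subst (w j k) i k) = initPart (subst (w i k) j k)) :
    (∃! π : Equiv.Perm (Fin n), ∀ i j : Fin n, i < j →
      initPart (w i j) = initPart (subst ((List.finRange n).map ⇑π) i j)) ∧
    (∀ π : Equiv.Perm (Fin n),
      (∀ i j : Fin n, i < j →
        initPart (w i j) = initPart (subst ((List.finRange n).map ⇑π) i j)) →
      ∀ w' : List (Fin n), w' ≠ [] →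
        (∀ i j : Fin n, i < j → initPart (subst w' i j) = initPart (w i j)) →
        initPart w' = (List.finRange n).map ⇑π) := by
  have hw : IsEssentialScheme w := ⟨hc, hC1, hC2⟩
  have := hw.isStrictTotalOrder hn
  obtain ⟨σ, hσ⟩ := exists_perm_lt_iff (Precedes w)
  have hσ_scheme (i j : Fin n) (hij : i < j) :
      initPart (w i j) = initPart (subst ((List.finRange n).map σ.symm) i j) :=
    hw.initPart_eq_initPart_subst hn
      (fun a => List.mem_map.mpr ⟨σ a, List.mem_finRange _, σ.symm_apply_apply a⟩)
      (by simpa [List.idxOf_map_perm_finRange] using hσ) hij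
  have hnodup (π : Equiv.Perm (Fin n)) : ((List.finRange n).map π).Nodup :=
    (List.nodup_finRange n).map π.injective
  refine ⟨⟨σ.symm, hσ_scheme, fun π hπ => ?_⟩, fun π hπ w' _ hw' => ?_⟩
  · have h := hw.initPart_eq_of_realizesScheme (by omega) (fun i j hij => (hπ i j hij).symm)
      (fun i j hij => (hσ_scheme i j hij).symm)
    rw [(hnodup π).initPart_eq, (hnodup σ.symm).initPart_eq] at h
    exact Equiv.ext fun k => List.map_eq_map_iff.mp h k (List.mem_finRange k)
  · rw [hw.initPart_eq_of_realizesScheme (by omega) hw' (fun i j hij => (hπ i j hij).symm),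
      (hnodup π).initPart_eq]
end

section
/- Let k, l ∈ {1,…,n} and let w be a word over X_n with c(w) = X_n \ {x_k} and σ(w) = x_l. Let p, q ∈ {1,…,n} \ {l} with p < q. Then s(w)^{(pq)} = s(w^{(pq)}); that is, taking the prefix s commutes with the substitution replacing x_p by x_q. -/
lemma subst_indexOf_ne {X : Type*} [DecidableEq X] (w : List X) (p q x : X)
    (hxp : x ≠ p) (hxq : x ≠ q) : (subst w p q).idxOf x = w.idxOf x := by
  induction w with
  | nil => rfl
  | cons a t ih =>
    simp only [subst, List.map_cons] at *
    by_cases hap : a = p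
    · subst hap
      rw [if_pos rfl, List.idxOf_cons_ne _ (Ne.symm hxq),
        List.idxOf_cons_ne _ (Ne.symm hxp), ih]
    · rw [if_neg hap]
      by_cases hax : a = x
      · subst hax; rw [List.idxOf_cons_self, List.idxOf_cons_self]
      · rw [List.idxOf_cons_ne _ hax, List.idxOf_cons_ne _ hax, ih]

lemma subst_indexOf_q {X : Type*} [DecidableEq X] (w : List X) (p q : X)
    (hpq : p ≠ q) : (subst w p q).idxOf q = min (w.idxOf p) (w.idxOf q) := by
  induction w with
  | nil => rfl
  | cons a t ih =>
    simp only [subst, List.map_cons] at *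
    by_cases hap : a = p
    · subst hap
      rw [if_pos rfl, List.idxOf_cons_self, List.idxOf_cons_self,
        List.idxOf_cons_ne _ hpq]
      simp
    · rw [if_neg hap]
      by_cases haq : a = q
      · subst haq
        rw [List.idxOf_cons_self, List.idxOf_cons_self,
          List.idxOf_cons_ne _ hap]
        simp
      · rw [List.idxOf_cons_ne _ haq, List.idxOf_cons_ne _ haq,
          List.idxOf_cons_ne _ hap, ih, Nat.succ_eq_add_one,
          Nat.succ_eq_add_one, Nat.succ_eq_add_one]
        omega

lemma mem_subst_s18 {X : Type*} [DecidableEq X] {w : List X} {p q x : X}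
    (hx : x ∈ subst w p q) (hxq : x ≠ q) : x ∈ w ∧ x ≠ p := by
  simp only [subst, List.mem_map] at hx
  obtain ⟨t, ht, hft⟩ := hx
  by_cases htp : t = p
  · simp [htp] at hft; exact absurd hft.symm hxq
  · rw [if_neg htp] at hft
    subst hft; exact ⟨ht, htp⟩

/-- If `c(w) = X_n \ {x_k}` and `σ(w) = x_l`, and `p < q` with
`p, q ≠ l`, then the prefix operator `s` commutes with the substitution replacing
`x_p` by `x_q`: `s(w)^{(pq)} = s(w^{(pq)})`. -/
theorem wordS_subst_comm (n : ℕ) (k l : Fin n) (w : List (Fin n))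
    (hc : w.toFinset = Finset.univ \ {k}) (hsig : wordSigma w = [l])
    (p q : Fin n) (hp : p ≠ l) (hq : q ≠ l) (hpq : p < q) :
    subst (wordS w) p q = wordS (subst w p q) := by
  have hpq' : p ≠ q := ne_of_lt hpq
  set K := w.toFinset.sup fun x => w.idxOf x with hK
  -- from hsig : w[K] = l and K < w.length
  have hdrop : ∃ rest, w.drop K = l :: rest := by
    unfold wordSigma at hsig
    rcases hd : w.drop K with _ | ⟨a, rest⟩
    · rw [hd] at hsig; simp at hsig
    · rw [hd] at hsig; simp at hsig; exact ⟨rest, by rw [hsig]⟩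
  obtain ⟨rest, hdrop⟩ := hdrop
  have hKlt : K < w.length := by
    by_contra h
    rw [List.drop_eq_nil_of_le (le_of_not_gt h)] at hdrop
    exact List.cons_ne_nil _ _ hdrop.symm
  have hgetK : w[K] = l := by
    have h2 := List.drop_eq_getElem_cons (l := w) hKlt
    rw [hdrop] at h2
    exact (List.cons.injEq _ _ _ _ ▸ h2).1.symm
  have hlw : l ∈ w := hgetK ▸ List.getElem_mem _
  -- K = indexOf l w
  have hKl : w.idxOf l = K := by
    have hne : w.toFinset.Nonempty := ⟨l, List.mem_toFinset.mpr hlw⟩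
    obtain ⟨x, hxmem, hxeq⟩ := Finset.exists_mem_eq_sup w.toFinset hne
      (fun x => w.idxOf x)
    rw [← hK] at hxeq
    have hxlt : w.idxOf x < w.length := hxeq ▸ hKlt
    have : w[w.idxOf x] = x := List.getElem_idxOf hxlt
    have hxl : x = l := by rw [← this]; simp only [← hxeq]; exact hgetK
    rw [← hxl]; exact hxeq.symm
  have hle : ∀ x ∈ w.toFinset, w.idxOf x ≤ K :=
    fun x hx => Finset.le_sup (f := fun x => w.idxOf x) hx
  -- the sup for subst w equals K
  have hK' : ((subst w p q).toFinset.sup fun x => (subst w p q).idxOf x) = K := by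
    apply le_antisymm
    · apply Finset.sup_le
      intro x hx
      rw [List.mem_toFinset] at hx
      by_cases hxq : x = q
      · rw [hxq] at hx ⊢
        rw [subst_indexOf_q w p q hpq']
        -- q ∈ subst w means p ∈ w or q ∈ w
        have : p ∈ w ∨ q ∈ w := by
          simp only [subst, List.mem_map] at hx
          obtain ⟨t, ht, hft⟩ := hx
          by_cases htp : t = p
          · exact Or.inl (htp ▸ ht)
          · rw [if_neg htp] at hft; exact Or.inr (hft ▸ ht)
        rcases this with h | h
        · exact le_trans (min_le_left _ _) (hle p (List.mem_toFinset.mpr h))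
        · exact le_trans (min_le_right _ _) (hle q (List.mem_toFinset.mpr h))
      · obtain ⟨hxw, hxp⟩ := mem_subst_s18 hx hxq
        rw [subst_indexOf_ne w p q x hxp hxq]
        exact hle x (List.mem_toFinset.mpr hxw)
    · have hlsub : l ∈ subst w p q := by
        simp only [subst, List.mem_map]
        exact ⟨l, hlw, by rw [if_neg (Ne.symm hp)]⟩
      calc K = (subst w p q).idxOf l := by
              rw [subst_indexOf_ne w p q l (Ne.symm hp) (Ne.symm hq), hKl]
        _ ≤ _ := Finset.le_sup (f := fun x => (subst w p q).idxOf x) (List.mem_toFinset.mpr hlsub)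
  unfold wordS
  rw [hK', ← hK, subst, subst, List.map_take]
end
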